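/- arXiv:2109.08778 — 3 statements merged into one kernel-verified Lean document; each statement's English description precedes it below -/
import Mathlib

section
/- Let p ≥ 5 be prime, n ∈ ℕ, and p ≤ i < p². Then p divides the binomial coefficient C(np², i), and p divides the falling factorial (np²+k−1)(np²+k−2)⋯(np²+k−i) for any fixed rational k with p-integral value, in the sense that the product of these two quantities has p-adic valuation at least 2. -/
/-!
Write `m = n p²` and `x = m + k - 1`. Since `m` divides `i · C(m, i)` while `p² ∤ i`, the prime
`p` divides `C(m, i)`. The rational `x` is `p`-integral, so every factor `x - j` is, and among
the `p ≤ i` consecutive factors `x, x - 1, …, x - (p - 1)` the one with `j ≡ x (mod p)` is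
divisible by `p`. Each of the two quantities therefore has valuation at least one.
-/

open Finset

theorem Nat.Prime.dvd_choose_of_pow_dvd {p a m i : ℕ} (hp : p.Prime) (hm : p ^ a ∣ m)
    (hi0 : i ≠ 0) (hi : ¬ p ^ a ∣ i) : p ∣ m.choose i := by
  have hm_dvd : m ∣ m.choose i * i := by
    obtain ⟨j, rfl⟩ := Nat.exists_eq_succ_of_ne_zero hi0
    rcases m with _ | l
    · simp
    · exact ⟨l.choose j, (Nat.add_one_mul_choose_eq l j).symm⟩
  by_contra hC
  exact hi (((hp.coprime_iff_not_dvd.mpr hC).pow_left a).dvd_of_dvd_mul_left (hm.trans hm_dvd))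

theorem Rat.not_dvd_den_mul {p : ℕ} (hp : p.Prime) {a b : ℚ} (ha : ¬ p ∣ a.den)
    (hb : ¬ p ∣ b.den) : ¬ p ∣ (a * b).den := fun h =>
  (hp.dvd_mul.mp (h.trans (Rat.mul_den_dvd a b))).elim ha hb

namespace padicValRat

theorem nonneg_of_not_dvd_den {p : ℕ} {q : ℚ} (hq : ¬ p ∣ q.den) :
    0 ≤ padicValRat p q := by
  simp [padicValRat, padicValNat.eq_zero_of_not_dvd hq]

variable {p : ℕ} [hp : Fact p.Prime]

theorem exists_lt_one_le_sub {x : ℚ} (hx : ¬ p ∣ x.den) :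
    ∃ j < p, x ≠ j → 1 ≤ padicValRat p (x - j) := by
  have hden : (x.den : ZMod p) ≠ 0 := by rwa [Ne, ZMod.natCast_eq_zero_iff]
  set j := ((x.num : ZMod p) * (x.den : ZMod p)⁻¹).val
  refine ⟨j, ZMod.val_lt _, fun hxj => ?_⟩
  have hnum : (p : ℤ) ∣ x.num - j * x.den := by
    rw [← ZMod.intCast_zmod_eq_zero_iff_dvd]
    push_cast
    rw [ZMod.natCast_val, ZMod.cast_id, mul_assoc, inv_mul_cancel₀ hden, mul_one, sub_self]
  have hmul : (x - j) * x.den = ((x.num - j * x.den : ℤ) : ℚ) := by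
    push_cast
    rw [sub_mul, Rat.mul_den_eq_num]
  have hsub : x - j ≠ 0 := sub_ne_zero.mpr hxj
  have hnum0 : x.num - j * x.den ≠ 0 := by
    rw [← Int.cast_ne_zero (α := ℚ), ← hmul]
    exact mul_ne_zero hsub (by simp)
  have key : 1 ≤ padicValRat p ((x - j) * x.den) := by
    rw [hmul, padicValRat.of_int]
    exact_mod_cast ((padicValInt_dvd_iff 1 _).mp (by simpa using hnum)).resolve_left hnum0
  rwa [padicValRat.mul hsub (by simp), padicValRat.of_nat,
    padicValNat.eq_zero_of_not_dvd hx, Nat.cast_zero, add_zero] at key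

theorem one_le_prod_range_sub {x : ℚ} (hx : ¬ p ∣ x.den) {i : ℕ} (hi : p ≤ i)
    (h0 : ∏ j ∈ range i, (x - j) ≠ 0) : 1 ≤ padicValRat p (∏ j ∈ range i, (x - j)) := by
  obtain ⟨j₀, hj₀p, hj₀⟩ := exists_lt_one_le_sub hx
  have hj₀i : j₀ ∈ range i := mem_range.mpr (hj₀p.trans_le hi)
  rw [← mul_prod_erase _ _ hj₀i] at h0 ⊢
  have hrest : 0 ≤ padicValRat p (∏ j ∈ (range i).erase j₀, (x - j)) :=
    nonneg_of_not_dvd_den <| prod_induction _ (fun q : ℚ => ¬ p ∣ q.den)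
      (fun _ _ => Rat.not_dvd_den_mul hp.out) (by simp [hp.out.one_lt.ne'])
      (fun j _ => by rwa [Rat.sub_natCast_den])
  rw [padicValRat.mul (left_ne_zero_of_mul h0) (right_ne_zero_of_mul h0)]
  linarith [hj₀ (sub_ne_zero.mp (left_ne_zero_of_mul h0))]

end padicValRat

theorem stmt8_general (p : ℕ) (hp : p.Prime) (n i : ℕ)
    (hpi : p ≤ i) (hip : i < p ^ 2) (k : ℚ) (hk : ¬ p ∣ k.den) :
    p ∣ (n * p ^ 2).choose i ∧
    (((n * p ^ 2).choose i : ℚ) * ∏ j ∈ Finset.range i, ((n * p ^ 2 : ℚ) + k - 1 - j) ≠ 0 →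
      2 ≤ padicValRat p
        (((n * p ^ 2).choose i : ℚ) * ∏ j ∈ Finset.range i, ((n * p ^ 2 : ℚ) + k - 1 - j))) := by
  have : Fact p.Prime := ⟨hp⟩
  have hi0 : i ≠ 0 := (hp.pos.trans_le hpi).ne'
  have hC : p ∣ (n * p ^ 2).choose i :=
    hp.dvd_choose_of_pow_dvd (dvd_mul_left _ _) hi0 fun h =>
      (Nat.le_of_dvd (by omega) h).not_gt hip
  refine ⟨hC, fun h0 => ?_⟩
  have hx : ¬ p ∣ ((n * p ^ 2 : ℚ) + k - 1).den := by
    have : (n * p ^ 2 : ℚ) + k - 1 = k + ((n * p ^ 2 - 1 : ℤ) : ℚ) := by push_cast; ring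
    rwa [this, Rat.add_intCast_den]
  have hC0 := left_ne_zero_of_mul h0
  have hCval : 1 ≤ padicValRat p ((n * p ^ 2).choose i : ℚ) := by
    rw [padicValRat.of_nat]
    exact_mod_cast one_le_padicValNat_of_dvd (by exact_mod_cast hC0) hC
  rw [padicValRat.mul hC0 (right_ne_zero_of_mul h0)]
  linarith [padicValRat.one_le_prod_range_sub hx hpi (right_ne_zero_of_mul h0)]

/-- Let `p ≥ 5` be prime, `n ∈ ℕ`, and `p ≤ i < p²`.  Then `p` divides `C(np², i)`,
and for any fixed `p`-integral rational `k`, the product of `C(np², i)` with the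
falling factorial `(np²+k−1)(np²+k−2)⋯(np²+k−i)` has `p`-adic valuation at
least `2`. -/
theorem stmt8 (p : ℕ) (hp : p.Prime) (hp5 : 5 ≤ p) (n i : ℕ)
    (hpi : p ≤ i) (hip : i < p ^ 2) (k : ℚ) (hk : ¬ p ∣ k.den) :
    p ∣ (n * p ^ 2).choose i ∧
    (((n * p ^ 2).choose i : ℚ) * ∏ j ∈ Finset.range i, ((n * p ^ 2 : ℚ) + k - 1 - j) ≠ 0 →
      2 ≤ padicValRat p
        (((n * p ^ 2).choose i : ℚ) * ∏ j ∈ Finset.range i, ((n * p ^ 2 : ℚ) + k - 1 - j))) :=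
  stmt8_general p hp n i hpi hip k hk
end

section
/- Let p ≥ 5 be prime, n ∈ ℕ, k a p-integral rational, and p² ≤ i ≤ np². Then the falling factorial [np²+k−1]_i = (np²+k−1)(np²+k−2)⋯(np²+k−i) has p-adic valuation at least p·⌊i/p²⌋. -/
/-!
Write `x = np² + k - 1`, a `p`-integral rational. Since `x` is congruent mod `p` to some
residue `r`, every factor `x - j` with `j ≡ r [MOD p]` has valuation at least `1`, and all
factors have valuation at least `0`. Among `0 ≤ j < i` there are at least `⌊i/p⌋` such `j`,
and `p·⌊i/p²⌋ ≤ ⌊i/p⌋`.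
-/

open Finset

lemma padicValRat_prod {p : ℕ} [Fact p.Prime] {ι : Type*} (s : Finset ι) (f : ι → ℚ)
    (h : ∀ j ∈ s, f j ≠ 0) :
    padicValRat p (∏ j ∈ s, f j) = ∑ j ∈ s, padicValRat p (f j) := by
  classical
  induction s using Finset.induction with
  | empty => simp
  | insert a s ha ih =>
    rw [prod_insert ha, sum_insert ha,
      padicValRat.mul (h a (mem_insert_self a s))
        (prod_ne_zero_iff.2 fun b hb => h b (mem_insert_of_mem hb)),
      ih fun b hb => h b (mem_insert_of_mem hb)]

lemma padicValRat_eq_padicValInt_num {p : ℕ} {q : ℚ} (hq : ¬p ∣ q.den) :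
    padicValRat p q = padicValInt p q.num := by
  rw [padicValRat_def, padicValNat.eq_zero_of_not_dvd hq, Nat.cast_zero, sub_zero]

lemma padicValRat_nonneg_of_not_dvd_den {p : ℕ} {q : ℚ} (hq : ¬p ∣ q.den) :
    0 ≤ padicValRat p q := by
  rw [padicValRat_eq_padicValInt_num hq]
  exact Nat.cast_nonneg _

lemma one_le_padicValRat_of_dvd_num {p : ℕ} [Fact p.Prime] {q : ℚ} (hq0 : q ≠ 0)
    (hq : ¬p ∣ q.den) (hpq : (p : ℤ) ∣ q.num) : 1 ≤ padicValRat p q := by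
  rw [padicValRat_eq_padicValInt_num hq]
  have := (padicValInt_dvd_iff 1 q.num).1 (by rwa [pow_one])
  exact_mod_cast this.resolve_left (Rat.num_ne_zero.2 hq0)

lemma Rat.num_sub_natCast (x : ℚ) (j : ℕ) : (x - j).num = x.num - j * x.den := by
  have h := Rat.mul_den_eq_num (x - j)
  rw [Rat.sub_natCast_den, sub_mul, Rat.mul_den_eq_num] at h
  exact_mod_cast h.symm

lemma exists_dvd_num_sub_natCast_of_modEq {p : ℕ} [Fact p.Prime] {x : ℚ} (hx : ¬p ∣ x.den) :
    ∃ r : ℕ, ∀ j : ℕ, j ≡ r [MOD p] → (p : ℤ) ∣ (x - j).num := by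
  refine ⟨((x.num : ZMod p) / x.den).val, fun j hj => ?_⟩
  have hden : (x.den : ZMod p) ≠ 0 := by rwa [Ne, ZMod.natCast_eq_zero_iff]
  rw [Rat.num_sub_natCast, ← ZMod.intCast_zmod_eq_zero_iff_dvd]
  push_cast
  rw [(ZMod.natCast_eq_natCast_iff _ _ _).2 hj, ZMod.natCast_zmod_val, div_mul_cancel₀ _ hden,
    sub_self]

theorem div_le_padicValRat_prod_sub_natCast {p : ℕ} [Fact p.Prime] {x : ℚ} (hx : ¬p ∣ x.den)
    (i : ℕ) (hne : ∏ j ∈ range i, (x - j) ≠ 0) :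
    ((i / p : ℕ) : ℤ) ≤ padicValRat p (∏ j ∈ range i, (x - j)) := by
  obtain ⟨r, hr⟩ := exists_dvd_num_sub_natCast_of_modEq hx
  have hcount : i / p ≤ #{j ∈ range i | j ≡ r [MOD p]} := by
    rw [← Nat.count_eq_card_filter_range, Nat.count_modEq_card _ (Fact.out : p.Prime).pos]
    exact Nat.le_add_right _ _
  rw [padicValRat_prod _ _ (prod_ne_zero_iff.1 hne)]
  calc ((i / p : ℕ) : ℤ) ≤ #{j ∈ range i | j ≡ r [MOD p]} := by exact_mod_cast hcount
    _ = ∑ j ∈ range i, if j ≡ r [MOD p] then (1 : ℤ) else 0 := by rw [sum_boole]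
    _ ≤ ∑ j ∈ range i, padicValRat p (x - j) := by
      refine sum_le_sum fun j hj => ?_
      have hden : ¬p ∣ (x - j).den := by rwa [Rat.sub_natCast_den]
      split_ifs with hjr
      · exact one_le_padicValRat_of_dvd_num (prod_ne_zero_iff.1 hne j hj) hden (hr j hjr)
      · exact padicValRat_nonneg_of_not_dvd_den hden

theorem stmt9_general (p : ℕ) (hp : p.Prime) (n i : ℕ)
    (k : ℚ) (hk : ¬ p ∣ k.den)
    (hne : ∏ j ∈ Finset.range i, ((n * p ^ 2 : ℚ) + k - 1 - j) ≠ 0) :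
    ((p * (i / p ^ 2) : ℕ) : ℤ) ≤
      padicValRat p (∏ j ∈ Finset.range i, ((n * p ^ 2 : ℚ) + k - 1 - j)) := by
  have : Fact p.Prime := ⟨hp⟩
  have hden : ((n * p ^ 2 : ℚ) + k - 1).den = k.den := by
    rw [show (n * p ^ 2 : ℚ) + k - 1 = k + ((n * p ^ 2 - 1 : ℤ) : ℚ) by push_cast; ring,
      Rat.add_intCast_den]
  have hdiv : p * (i / p ^ 2) ≤ i / p := by
    rw [sq, ← Nat.div_div_eq_div_mul]
    exact Nat.mul_div_le _ _
  calc ((p * (i / p ^ 2) : ℕ) : ℤ) ≤ ((i / p : ℕ) : ℤ) := by exact_mod_cast hdiv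
    _ ≤ _ := div_le_padicValRat_prod_sub_natCast (by rwa [hden]) i hne

/-- Let `p ≥ 5` be prime, `n ∈ ℕ`, `k` a `p`-integral rational, and `p² ≤ i ≤ np²`.
Then the falling factorial `[np²+k−1]_i = (np²+k−1)(np²+k−2)⋯(np²+k−i)` has
`p`-adic valuation at least `p·⌊i/p²⌋`. -/
theorem stmt9 (p : ℕ) (hp : p.Prime) (hp5 : 5 ≤ p) (n i : ℕ)
    (hi1 : p ^ 2 ≤ i) (hi2 : i ≤ n * p ^ 2) (k : ℚ) (hk : ¬ p ∣ k.den)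
    (hne : ∏ j ∈ Finset.range i, ((n * p ^ 2 : ℚ) + k - 1 - j) ≠ 0) :
    ((p * (i / p ^ 2) : ℕ) : ℤ) ≤
      padicValRat p (∏ j ∈ Finset.range i, ((n * p ^ 2 : ℚ) + k - 1 - j)) :=
  stmt9_general p hp n i k hk hne
end

section
/- (Zagier's Taylor expansion formula) Let f be a holomorphic modular form of weight k on a congruence subgroup Γ′ (with Γ′ ⊆ Γ₁(4) if k is a half-integer), and define recursively f₀ = f, f₋₁ = 0, f_{n+1} = (Df_n − ((k+2n)/12)E₂f_n) − (n(n+k−1)/144)E₄f_{n−1}. Then for all n ≥ 0, Dⁿf = Σ_{i=0}^{n} C(n,i)·[n+k−1]↓[n+k−1−i]·f_{n−i}·(E₂/12)^i, where [x]↓[y] := x(x−1)⋯(y+1). -/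
/-!
Induction on `n`. By the Ramanujan relation `12 DE₂ = E₂² - E₄` and the recursion, `D(f_m E₂^i)`
is a combination of `f_{m+1} E₂^i`, `f_m E₂^(i+1)` and two `E₄`-terms. Weighted by the
coefficients `c(n, i)` of the formula, the `E₄`-terms of consecutive `i` cancel in a telescoping
sum (thanks to the ratio `c(n, i+1) / c(n, i)`), and the remaining terms recombine by the
Pascal-type recurrence `c(n+1, i+1) = c(n, i+1) + (k + 2n - i)/12 · c(n, i)`.
-/

open Finset

def zagierCoeff (k : ℚ) (n i : ℕ) : ℚ :=
  (n.choose i : ℚ) * (∏ j ∈ range i, ((n : ℚ) + k - 1 - j)) * (1 / 12) ^ i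

@[simp]
lemma zagierCoeff_zero_right (k : ℚ) (n : ℕ) : zagierCoeff k n 0 = 1 := by simp [zagierCoeff]

@[simp]
lemma zagierCoeff_succ_self (k : ℚ) (n : ℕ) : zagierCoeff k n (n + 1) = 0 := by
  simp [zagierCoeff, Nat.choose_succ_self]

lemma cast_choose_succ_right_eq (n m : ℕ) :
    (n.choose (m + 1) : ℚ) * (m + 1) = n.choose m * (n - m) := by
  rcases le_or_gt m n with h | h
  · have := congrArg (Nat.cast (R := ℚ)) (Nat.choose_succ_right_eq n m)
    push_cast [Nat.cast_sub h] at this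
    exact this
  · simp [Nat.choose_eq_zero_of_lt h, Nat.choose_eq_zero_of_lt (Nat.lt_succ_of_lt h)]

lemma zagierCoeff_succ_succ (k : ℚ) (n i : ℕ) :
    zagierCoeff k (n + 1) (i + 1) =
      zagierCoeff k n (i + 1) + (k + 2 * n - i) / 12 * zagierCoeff k n i := by
  have hprod : ∏ j ∈ range (i + 1), ((n + 1 : ℕ) + k - 1 - j : ℚ) =
      (n + k) * ∏ j ∈ range i, ((n : ℚ) + k - 1 - j) := by
    rw [prod_range_succ', mul_comm]
    push_cast
    congr 1
    · ring
    · exact prod_congr rfl fun j _ ↦ by ring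
  rw [zagierCoeff, zagierCoeff, zagierCoeff, hprod, prod_range_succ, Nat.choose_succ_succ]
  push_cast
  linear_combination (∏ j ∈ range i, ((n : ℚ) + k - 1 - j)) * (1 / 12) ^ (i + 1) *
    cast_choose_succ_right_eq n i

lemma zagierCoeff_succ_mul (k : ℚ) (n i : ℕ) :
    zagierCoeff k n (i + 1) * ((i + 1) / 12) =
      (n - i) * (n - i + k - 1) / 144 * zagierCoeff k n i := by
  rw [zagierCoeff, zagierCoeff, prod_range_succ]
  linear_combination (∏ j ∈ range i, ((n : ℚ) + k - 1 - j)) * (n + k - 1 - i) *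
    (1 / 12) ^ (i + 2) * cast_choose_succ_right_eq n i

section

variable {R : Type*} [CommRing R] [Algebra ℚ R]

/-- At `n = 0` the truncated `fseq (0 - 1) = fseq 0` carries the coefficient `0`, which encodes
`f₋₁ = 0`. -/
def IsZagierSeq (D : Derivation ℚ R R) (E2 E4 : R) (k : ℚ) (fseq : ℕ → R) : Prop :=
  ∀ n : ℕ, fseq (n + 1) =
    (D (fseq n) - ((k + 2 * n) / 12) • (E2 * fseq n)) -
      ((n * (n + k - 1)) / 144) • (E4 * fseq (n - 1))

variable (D : Derivation ℚ R R) {E2 E4 : R} {k : ℚ} {fseq : ℕ → R}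

lemma map_pow_of_ramanujan (hE2 : (12 : ℚ) • D E2 = E2 ^ 2 - E4) (i : ℕ) :
    D (E2 ^ i) = ((i : ℚ) / 12) • (E2 ^ (i + 1) - E2 ^ (i - 1) * E4) := by
  have hD : D E2 = (1 / 12 : ℚ) • (E2 ^ 2 - E4) := by
    rw [← hE2, smul_smul]; norm_num
  rcases i with _ | i
  · simp
  · rw [Derivation.leibniz_pow, hD, Nat.add_sub_cancel, smul_eq_mul, nsmul_eq_mul]
    simp only [Algebra.smul_def, div_eq_mul_inv, one_mul, map_mul, map_add, map_one, map_natCast,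
      Nat.cast_succ]
    ring

lemma IsZagierSeq.map_mul_pow (h : IsZagierSeq D E2 E4 k fseq)
    (hE2 : (12 : ℚ) • D E2 = E2 ^ 2 - E4) (m i : ℕ) :
    D (fseq m * E2 ^ i) = fseq (m + 1) * E2 ^ i
      + ((k + 2 * m + i) / 12) • (fseq m * E2 ^ (i + 1))
      + ((m * (m + k - 1)) / 144) • (fseq (m - 1) * E2 ^ i * E4)
      - ((i : ℚ) / 12) • (fseq m * E2 ^ (i - 1) * E4) := by
  have hDf : D (fseq m) = fseq (m + 1) + ((k + 2 * m) / 12) • (E2 * fseq m)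
      + ((m * (m + k - 1)) / 144) • (E4 * fseq (m - 1)) := by
    rw [h m]; abel
  rw [Derivation.leibniz, map_pow_of_ramanujan D hE2, hDf]
  simp only [smul_eq_mul, Algebra.smul_def, div_eq_mul_inv, map_add, map_sub, map_mul,
    map_natCast, map_ofNat, map_one]
  rcases i with _ | i
  · simp only [Nat.cast_zero, zero_mul, zero_add, pow_zero]
    ring
  · simp only [Nat.cast_succ, Nat.add_sub_cancel]
    ring

lemma IsZagierSeq.map_sum_zagierCoeff_smul (h : IsZagierSeq D E2 E4 k fseq)
    (hE2 : (12 : ℚ) • D E2 = E2 ^ 2 - E4) (n : ℕ) :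
    D (∑ i ∈ range (n + 1), zagierCoeff k n i • (fseq (n - i) * E2 ^ i)) =
      ∑ i ∈ range (n + 2), zagierCoeff k (n + 1) i • (fseq (n + 1 - i) * E2 ^ i) := by
  -- the `E₄`-terms of index `i` are `g (i + 1) - g i`
  set g : ℕ → R := fun i ↦ (zagierCoeff k n i * (i / 12)) • (fseq (n - i) * E2 ^ (i - 1) * E4)
  have hterm : ∀ i ∈ range (n + 1), zagierCoeff k n i • D (fseq (n - i) * E2 ^ i) =
      zagierCoeff k n i • (fseq (n - i + 1) * E2 ^ i)
        + ((k + 2 * n - i) / 12 * zagierCoeff k n i) • (fseq (n - i) * E2 ^ (i + 1))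
        + (g (i + 1) - g i) := by
    intro i hi
    have hin : i ≤ n := Nat.lt_succ_iff.mp (mem_range.mp hi)
    have hE4 : zagierCoeff k n i * (((n - i : ℕ) : ℚ) * ((n - i : ℕ) + k - 1) / 144) =
        zagierCoeff k n (i + 1) * (((i + 1 : ℕ) : ℚ) / 12) := by
      push_cast [Nat.cast_sub hin]
      linear_combination -(zagierCoeff_succ_mul k n i)
    rw [h.map_mul_pow D hE2, smul_sub, smul_add, smul_add, smul_smul, smul_smul, smul_smul,
      hE4, Nat.cast_sub hin]
    simp only [g, Nat.add_sub_cancel, Nat.sub_sub]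
    rw [add_sub_assoc, add_sub_assoc]
    congr 2
    ring_nf
  have hg0 : g 0 = 0 := by simp [g]
  have hgtop : g (n + 1) = 0 := by simp [g]
  have hshift : ∑ i ∈ range (n + 1), zagierCoeff k n i • (fseq (n - i + 1) * E2 ^ i) =
      ∑ i ∈ range (n + 1), zagierCoeff k n (i + 1) • (fseq (n - i) * E2 ^ (i + 1))
        + fseq (n + 1) := by
    rw [sum_range_succ', sum_range_succ, zagierCoeff_succ_self, zero_smul, add_zero]
    simp only [zagierCoeff_zero_right, Nat.sub_zero, pow_zero, mul_one, one_smul]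
    congr 1
    refine sum_congr rfl fun i hi ↦ ?_
    rw [Nat.sub_add_eq, Nat.sub_add_cancel (Nat.sub_pos_of_lt (mem_range.mp hi))]
  simp only [map_sum, Derivation.map_smul]
  rw [sum_congr rfl hterm, sum_add_distrib, sum_add_distrib, sum_range_sub, hg0, hgtop,
    sub_zero, add_zero, hshift, sum_range_succ' _ (n + 1), zagierCoeff_zero_right]
  simp only [zagierCoeff_succ_succ, add_smul, sum_add_distrib, Nat.add_sub_add_right, Nat.sub_zero,
    pow_zero, mul_one, one_smul]
  abel

end

/-- **Zagier's Taylor expansion formula**, in the abstract setting of a commutative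
`ℚ`-algebra `R` with a derivation `D`, elements `E₂, E₄` satisfying the quasimodular
relation `DE₂ = (E₂² − E₄)/12`, a "weight" `k ∈ ℚ`, and the sequence `fₙ` defined by
`f₀ = f`, `f₋₁ = 0`,
`f_{n+1} = (Dfₙ − ((k+2n)/12)E₂fₙ) − (n(n+k−1)/144)E₄f_{n−1}`.
Then for all `n ≥ 0`,
`Dⁿf = Σ_{i=0}^{n} C(n,i)·(n+k−1)(n+k−2)⋯(n+k−i)·f_{n−i}·(E₂/12)ⁱ`. -/
theorem zagier_formula {R : Type*} [CommRing R] [Algebra ℚ R]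
    (D : Derivation ℚ R R) (E2 E4 f : R) (k : ℚ)
    (hE2 : (12 : ℚ) • D E2 = E2 ^ 2 - E4)
    (fseq : ℕ → R) (hf0 : fseq 0 = f)
    (hrec : ∀ n : ℕ, fseq (n + 1) =
      (D (fseq n) - ((k + 2 * n) / 12) • (E2 * fseq n)) -
        ((n * (n + k - 1)) / 144) • (E4 * fseq (n - 1)))
    (n : ℕ) :
    (⇑D)^[n] f = ∑ i ∈ Finset.range (n + 1),
      ((n.choose i : ℚ) * (∏ j ∈ Finset.range i, ((n : ℚ) + k - 1 - j)) * (1 / 12) ^ i) •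
        (fseq (n - i) * E2 ^ i) := by
  induction n with
  | zero => simp [hf0]
  | succ n ih =>
    rw [Function.iterate_succ_apply', ih]
    exact IsZagierSeq.map_sum_zagierCoeff_smul D hrec hE2 n
end
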